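/- arXiv:2401.13878 — 7 statements merged into one kernel-verified Lean document; each statement's English description precedes it below -/
import Mathlib

section
/- For positive rationals a, b with log(a/b) > D and any sequence n_k of natural numbers such that k! divides n_k for all k (so that a·n_k, b·n_k, c·n_k are eventually integers for rational a, b, c), for all sufficiently small positive rational c, the limit as k → ∞ of (1/n_k)·(log C(a·n_k, c·n_k) − log C(b·n_k, c·n_k)) exists and is strictly greater than c·D, where C(m, r) denotes the binomial coefficient. -/
open Filter Real

private lemma qmul_cast (q : ℚ) (hq : 0 < q) (m : ℕ) (h : q.den ∣ m) :
    (((q * (m : ℚ)).num.toNat : ℚ)) = q * m := by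
  obtain ⟨t, ht⟩ := h
  have hden : ((q.den : ℚ)) ≠ 0 := by exact_mod_cast q.den_nz
  have hqd : q * (q.den : ℚ) = (q.num : ℚ) := by
    calc q * (q.den : ℚ) = ((q.num : ℚ) / q.den) * q.den := by rw [Rat.num_div_den]
      _ = (q.num : ℚ) := div_mul_cancel₀ _ hden
  have h1 : (q * (m : ℚ)) = ((q.num * t : ℤ) : ℚ) := by
    subst ht
    push_cast
    rw [← mul_assoc, hqd]
  rw [h1, Rat.num_intCast]
  have hnn : 0 ≤ q.num * (t : ℤ) := mul_nonneg (Rat.num_pos.mpr hq).le (Int.ofNat_nonneg t)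
  exact_mod_cast congrArg (fun z : ℤ => (z : ℚ)) (Int.toNat_of_nonneg hnn)

private lemma aux_tendsto (q : ℚ) (hq : 0 < q) (n : ℕ → ℕ)
    (hn : Filter.Tendsto (fun k => ((n k : ℕ) : ℝ)) Filter.atTop Filter.atTop)
    (m : ℕ → ℕ) (hm : ∀ᶠ k in Filter.atTop, ((m k : ℕ) : ℝ) = (q : ℝ) * (n k)) :
    Filter.Tendsto
      (fun k => (Real.log (Nat.factorial (m k)) - (m k) * Real.log (m k) + (m k)) / (n k))
      Filter.atTop (nhds 0) := by
  have hqR : (0 : ℝ) < (q : ℝ) := by exact_mod_cast hq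
  have hmR : Tendsto (fun k => ((m k : ℕ) : ℝ)) atTop atTop :=
    Tendsto.congr' (hm.mono fun k h => h.symm) ((tendsto_const_mul_atTop_of_pos hqR).mpr hn)
  have hmN : Tendsto m atTop atTop := tendsto_natCast_atTop_iff.mp hmR
  have hm1 : ∀ᶠ k in atTop, 1 ≤ m k := hmN.eventually_ge_atTop 1
  have heq : ∀ᶠ k in atTop,
      Real.log (Stirling.stirlingSeq (m k)) / (n k : ℝ)
        + (1 / 2) * ((Real.log 2 + Real.log q) / (n k : ℝ) + Real.log (n k) / (n k : ℝ))
      = (Real.log (Nat.factorial (m k)) - (m k) * Real.log (m k) + (m k)) / (n k) := by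
    filter_upwards [hm1, hm, hn.eventually_ge_atTop 1] with k h1 h2 h3
    have hν : (0 : ℝ) < (n k : ℝ) := lt_of_lt_of_le one_pos h3
    have hmpos : (0 : ℝ) < ((m k : ℕ) : ℝ) := by rw [h2]; positivity
    have hform := Stirling.log_stirlingSeq_formula (m k)
    have hdiv : Real.log (((m k : ℕ) : ℝ) / Real.exp 1) = Real.log (m k) - 1 := by
      rw [Real.log_div hmpos.ne' (Real.exp_ne_zero 1), Real.log_exp]
    have h2m : Real.log (2 * ((m k : ℕ) : ℝ)) = Real.log 2 + Real.log (m k) :=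
      Real.log_mul two_ne_zero hmpos.ne'
    have hlogm : Real.log ((m k : ℕ) : ℝ) = Real.log q + Real.log (n k) := by
      rw [h2, Real.log_mul hqR.ne' hν.ne']
    have hkey : Real.log (Nat.factorial (m k)) - (m k) * Real.log (m k) + (m k)
        = Real.log (Stirling.stirlingSeq (m k))
          + (1 / 2) * (Real.log 2 + Real.log q + Real.log (n k)) := by
      rw [hform, hdiv, h2m, hlogm]; ring
    rw [hkey]; ring
  have hsqrt : (Real.sqrt Real.pi) ≠ 0 := by positivity
  have hst : Tendsto (fun k => Real.log (Stirling.stirlingSeq (m k))) atTop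
      (nhds (Real.log (Real.sqrt Real.pi))) :=
    ((Real.continuousAt_log hsqrt).tendsto.comp Stirling.tendsto_stirlingSeq_sqrt_pi).comp hmN
  have h1 : Tendsto (fun k => Real.log (Stirling.stirlingSeq (m k)) / (n k : ℝ)) atTop
      (nhds 0) := hst.div_atTop hn
  have h2 : Tendsto (fun k => (Real.log 2 + Real.log q) / (n k : ℝ)) atTop (nhds 0) :=
    tendsto_const_nhds.div_atTop hn
  have h3 : Tendsto (fun k => Real.log (n k) / (n k : ℝ)) atTop (nhds 0) :=
    (Real.isLittleO_log_id_atTop.tendsto_div_nhds_zero).comp hn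
  have := (h1.add ((h2.add h3).const_mul (1 / 2))).congr' heq
  simpa using this

/-- For positive rationals `a, b` with `log (a/b) > D`, and a sequence `n k` with `k! ∣ n k`,
for all sufficiently small positive rational `c` the limit of
`(log C(a n_k, c n_k) - log C(b n_k, c n_k)) / n_k` exists and exceeds `c * D`. -/
theorem stmt1 (a b : ℚ) (D : ℝ) (ha : 0 < a) (hb : 0 < b)
    (hD : Real.log ((a : ℝ) / (b : ℝ)) > D)
    (n : ℕ → ℕ) (hdvd : ∀ k, Nat.factorial k ∣ n k) (hpos : ∀ k, 0 < n k) :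
    ∃ ε : ℚ, 0 < ε ∧ ∀ c : ℚ, 0 < c → c < ε →
      ∃ L : ℝ, L > (c : ℝ) * D ∧
        Filter.Tendsto
          (fun k =>
            (Real.log (Nat.choose (a * (n k : ℚ)).num.toNat (c * (n k : ℚ)).num.toNat) -
              Real.log (Nat.choose (b * (n k : ℚ)).num.toNat (c * (n k : ℚ)).num.toNat)) /
              (n k : ℝ))
          Filter.atTop (nhds L) := by
  have haR : (0 : ℝ) < (a : ℝ) := by exact_mod_cast ha
  have hbR : (0 : ℝ) < (b : ℝ) := by exact_mod_cast hb
  have hδ : (0 : ℝ) < (a : ℝ) * (Real.log ((a : ℝ) / (b : ℝ)) - D) := by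
    apply mul_pos haR; linarith
  obtain ⟨q, hq0, hqδ⟩ := exists_rat_btwn hδ
  have hq0' : 0 < q := by exact_mod_cast hq0
  refine ⟨min a (min b q), by positivity, ?_⟩
  intro c hc hcε
  have hca : c < a := lt_of_lt_of_le hcε (min_le_left _ _)
  have hcb : c < b := lt_of_lt_of_le hcε ((min_le_right _ _).trans (min_le_left _ _))
  have hcq : c < q := lt_of_lt_of_le hcε ((min_le_right _ _).trans (min_le_right _ _))
  have hz : (0 : ℝ) < (c : ℝ) := by exact_mod_cast hc
  have hxz : (0 : ℝ) < (a : ℝ) - (c : ℝ) := by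
    have : (c : ℝ) < (a : ℝ) := by exact_mod_cast hca
    linarith
  have hyz : (0 : ℝ) < (b : ℝ) - (c : ℝ) := by
    have : (c : ℝ) < (b : ℝ) := by exact_mod_cast hcb
    linarith
  refine ⟨(a : ℝ) * Real.log (a : ℝ) - ((a : ℝ) - (c : ℝ)) * Real.log ((a : ℝ) - (c : ℝ))
      - ((b : ℝ) * Real.log (b : ℝ) - ((b : ℝ) - (c : ℝ)) * Real.log ((b : ℝ) - (c : ℝ))),
      ?_, ?_⟩
  · -- the inequality L > c * D
    have hlxy : Real.log ((a : ℝ) / (b : ℝ)) = Real.log (a : ℝ) - Real.log (b : ℝ) :=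
      Real.log_div haR.ne' hbR.ne'
    have h1 : Real.log ((a : ℝ) - (c : ℝ)) - Real.log (a : ℝ) ≤ ((a : ℝ) - (c : ℝ)) / (a : ℝ) - 1 := by
      have := Real.log_le_sub_one_of_pos (show (0 : ℝ) < ((a : ℝ) - (c : ℝ)) / (a : ℝ) by positivity)
      rwa [Real.log_div hxz.ne' haR.ne'] at this
    have h1' : (c : ℝ) / (a : ℝ) ≤ Real.log (a : ℝ) - Real.log ((a : ℝ) - (c : ℝ)) := by
      have e : ((a : ℝ) - (c : ℝ)) / (a : ℝ) - 1 = -((c : ℝ) / (a : ℝ)) := by field_simp; ring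
      rw [e] at h1; linarith
    have h2 : Real.log (b : ℝ) - Real.log ((b : ℝ) - (c : ℝ)) ≤ (c : ℝ) / ((b : ℝ) - (c : ℝ)) := by
      have h := Real.log_le_sub_one_of_pos (show (0 : ℝ) < (b : ℝ) / ((b : ℝ) - (c : ℝ)) by positivity)
      rw [Real.log_div hbR.ne' hyz.ne'] at h
      have e : (b : ℝ) / ((b : ℝ) - (c : ℝ)) - 1 = (c : ℝ) / ((b : ℝ) - (c : ℝ)) := by field_simp; ring
      rw [e] at h; linarith
    have e1 : ((a : ℝ) - (c : ℝ)) * ((c : ℝ) / (a : ℝ))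
        ≤ ((a : ℝ) - (c : ℝ)) * (Real.log (a : ℝ) - Real.log ((a : ℝ) - (c : ℝ))) :=
      mul_le_mul_of_nonneg_left h1' hxz.le
    have e2 : ((b : ℝ) - (c : ℝ)) * (Real.log (b : ℝ) - Real.log ((b : ℝ) - (c : ℝ)))
        ≤ ((b : ℝ) - (c : ℝ)) * ((c : ℝ) / ((b : ℝ) - (c : ℝ))) :=
      mul_le_mul_of_nonneg_left h2 hyz.le
    have e3 : ((b : ℝ) - (c : ℝ)) * ((c : ℝ) / ((b : ℝ) - (c : ℝ))) = (c : ℝ) := by field_simp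
    have e4 : ((a : ℝ) - (c : ℝ)) * ((c : ℝ) / (a : ℝ)) = (c : ℝ) - (c : ℝ) * (c : ℝ) / (a : ℝ) := by
      field_simp
    have hzq : (c : ℝ) < (q : ℝ) := by exact_mod_cast hcq
    have hzx : (c : ℝ) / (a : ℝ) < Real.log ((a : ℝ) / (b : ℝ)) - D := by
      rw [div_lt_iff₀ haR]
      nlinarith [hqδ, hzq]
    have e5 : (c : ℝ) * (c : ℝ) / (a : ℝ) < (c : ℝ) * (Real.log ((a : ℝ) / (b : ℝ)) - D) := by
      calc (c : ℝ) * (c : ℝ) / (a : ℝ) = (c : ℝ) * ((c : ℝ) / (a : ℝ)) := by ring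
        _ < (c : ℝ) * (Real.log ((a : ℝ) / (b : ℝ)) - D) := mul_lt_mul_of_pos_left hzx hz
    have e5' : (c : ℝ) * (c : ℝ) / (a : ℝ)
        < (c : ℝ) * Real.log (a : ℝ) - (c : ℝ) * Real.log (b : ℝ) - (c : ℝ) * D := by
      rw [hlxy] at e5; nlinarith [e5]
    nlinarith [e1, e2, e3, e4, e5']
  · -- the limit
    have hnk : ∀ k, k ≤ n k := fun k =>
      le_trans (Nat.self_le_factorial k) (Nat.le_of_dvd (hpos k) (hdvd k))
    have hnR : Filter.Tendsto (fun k => ((n k : ℕ) : ℝ)) Filter.atTop Filter.atTop :=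
      tendsto_natCast_atTop_atTop.comp (tendsto_atTop_mono hnk tendsto_id)
    have hcast : ∀ r : ℚ, 0 < r → ∀ᶠ k in Filter.atTop,
        (((r * ((n k : ℕ) : ℚ)).num.toNat : ℕ) : ℝ) = (r : ℝ) * ((n k : ℕ) : ℝ) := by
      intro r hr
      filter_upwards [Filter.eventually_ge_atTop r.den] with k hk
      have hd : r.den ∣ n k := dvd_trans (Nat.dvd_factorial r.pos hk) (hdvd k)
      have h := qmul_cast r hr (n k) hd
      exact_mod_cast congrArg (fun u : ℚ => (u : ℝ)) h
    have hAc := hcast a ha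
    have hBc := hcast b hb
    have hCc := hcast c hc
    have hCA : ∀ᶠ k in Filter.atTop,
        (c * ((n k : ℕ) : ℚ)).num.toNat ≤ (a * ((n k : ℕ) : ℚ)).num.toNat := by
      filter_upwards [hAc, hCc] with k h1 h2
      have hle : (((c * ((n k : ℕ) : ℚ)).num.toNat : ℕ) : ℝ)
          ≤ (((a * ((n k : ℕ) : ℚ)).num.toNat : ℕ) : ℝ) := by
        rw [h1, h2]
        have hca' : (c : ℝ) ≤ (a : ℝ) := by linarith
        exact mul_le_mul_of_nonneg_right hca' (Nat.cast_nonneg _)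
      exact_mod_cast hle
    have hCB : ∀ᶠ k in Filter.atTop,
        (c * ((n k : ℕ) : ℚ)).num.toNat ≤ (b * ((n k : ℕ) : ℚ)).num.toNat := by
      filter_upwards [hBc, hCc] with k h1 h2
      have hle : (((c * ((n k : ℕ) : ℚ)).num.toNat : ℕ) : ℝ)
          ≤ (((b * ((n k : ℕ) : ℚ)).num.toNat : ℕ) : ℝ) := by
        rw [h1, h2]
        have hcb' : (c : ℝ) ≤ (b : ℝ) := by linarith
        exact mul_le_mul_of_nonneg_right hcb' (Nat.cast_nonneg _)
      exact_mod_cast hle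
    have hACc : ∀ᶠ k in Filter.atTop,
        ((((a * ((n k : ℕ) : ℚ)).num.toNat - (c * ((n k : ℕ) : ℚ)).num.toNat : ℕ)) : ℝ)
          = ((a - c : ℚ) : ℝ) * ((n k : ℕ) : ℝ) := by
      filter_upwards [hAc, hCc, hCA] with k h1 h2 h3
      rw [Nat.cast_sub h3, h1, h2]
      push_cast
      ring
    have hBCc : ∀ᶠ k in Filter.atTop,
        ((((b * ((n k : ℕ) : ℚ)).num.toNat - (c * ((n k : ℕ) : ℚ)).num.toNat : ℕ)) : ℝ)
          = ((b - c : ℚ) : ℝ) * ((n k : ℕ) : ℝ) := by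
      filter_upwards [hBc, hCc, hCB] with k h1 h2 h3
      rw [Nat.cast_sub h3, h1, h2]
      push_cast
      ring
    have T1 := aux_tendsto a ha n hnR (fun k => (a * ((n k : ℕ) : ℚ)).num.toNat) hAc
    have T2 := aux_tendsto (a - c) (by linarith) n hnR
      (fun k => (a * ((n k : ℕ) : ℚ)).num.toNat - (c * ((n k : ℕ) : ℚ)).num.toNat) hACc
    have T3 := aux_tendsto b hb n hnR (fun k => (b * ((n k : ℕ) : ℚ)).num.toNat) hBc
    have T4 := aux_tendsto (b - c) (by linarith) n hnR
      (fun k => (b * ((n k : ℕ) : ℚ)).num.toNat - (c * ((n k : ℕ) : ℚ)).num.toNat) hBCc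
    have Tsum := ((T1.sub T2).sub T3).add T4
    have Tfull := (tendsto_const_nhds
        (x := (a : ℝ) * Real.log (a : ℝ) - ((a : ℝ) - (c : ℝ)) * Real.log ((a : ℝ) - (c : ℝ))
          - ((b : ℝ) * Real.log (b : ℝ) - ((b : ℝ) - (c : ℝ)) * Real.log ((b : ℝ) - (c : ℝ))))
        (f := Filter.atTop (α := ℕ))).add Tsum
    simp only [sub_zero, add_zero, zero_sub, zero_add, sub_self] at Tfull
    refine Tfull.congr' ?_
    have hacR : (((a - c : ℚ)) : ℝ) = (a : ℝ) - (c : ℝ) := by push_cast; ring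
    have hbcR : (((b - c : ℚ)) : ℝ) = (b : ℝ) - (c : ℝ) := by push_cast; ring
    filter_upwards [hAc, hBc, hCc, hCA, hCB, hACc, hBCc] with k h1 h2 h3 h4 h5 h6 h7
    have hν : (0 : ℝ) < ((n k : ℕ) : ℝ) := by exact_mod_cast hpos k
    have d1 : Real.log (Nat.choose ((a * ((n k : ℕ) : ℚ)).num.toNat) ((c * ((n k : ℕ) : ℚ)).num.toNat))
        = Real.log (Nat.factorial ((a * ((n k : ℕ) : ℚ)).num.toNat))
          - Real.log (Nat.factorial ((c * ((n k : ℕ) : ℚ)).num.toNat))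
          - Real.log (Nat.factorial ((a * ((n k : ℕ) : ℚ)).num.toNat - (c * ((n k : ℕ) : ℚ)).num.toNat)) := by
      have hmul := Nat.choose_mul_factorial_mul_factorial h4
      have hmulR : ((Nat.choose ((a * ((n k : ℕ) : ℚ)).num.toNat) ((c * ((n k : ℕ) : ℚ)).num.toNat) : ℕ) : ℝ)
          * (Nat.factorial ((c * ((n k : ℕ) : ℚ)).num.toNat) : ℝ)
          * (Nat.factorial ((a * ((n k : ℕ) : ℚ)).num.toNat - (c * ((n k : ℕ) : ℚ)).num.toNat) : ℝ)
          = (Nat.factorial ((a * ((n k : ℕ) : ℚ)).num.toNat) : ℝ) := by exact_mod_cast hmul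
      have hch : ((Nat.choose ((a * ((n k : ℕ) : ℚ)).num.toNat) ((c * ((n k : ℕ) : ℚ)).num.toNat) : ℕ) : ℝ) ≠ 0 := by
        exact_mod_cast (Nat.choose_pos h4).ne'
      have hf1 : ((Nat.factorial ((c * ((n k : ℕ) : ℚ)).num.toNat) : ℕ) : ℝ) ≠ 0 := by
        exact_mod_cast (Nat.factorial_pos _).ne'
      have hf2 : ((Nat.factorial ((a * ((n k : ℕ) : ℚ)).num.toNat - (c * ((n k : ℕ) : ℚ)).num.toNat) : ℕ) : ℝ) ≠ 0 := by
        exact_mod_cast (Nat.factorial_pos _).ne'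
      rw [← hmulR, Real.log_mul (mul_ne_zero hch hf1) hf2, Real.log_mul hch hf1]
      ring
    have d2 : Real.log (Nat.choose ((b * ((n k : ℕ) : ℚ)).num.toNat) ((c * ((n k : ℕ) : ℚ)).num.toNat))
        = Real.log (Nat.factorial ((b * ((n k : ℕ) : ℚ)).num.toNat))
          - Real.log (Nat.factorial ((c * ((n k : ℕ) : ℚ)).num.toNat))
          - Real.log (Nat.factorial ((b * ((n k : ℕ) : ℚ)).num.toNat - (c * ((n k : ℕ) : ℚ)).num.toNat)) := by
      have hmul := Nat.choose_mul_factorial_mul_factorial h5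
      have hmulR : ((Nat.choose ((b * ((n k : ℕ) : ℚ)).num.toNat) ((c * ((n k : ℕ) : ℚ)).num.toNat) : ℕ) : ℝ)
          * (Nat.factorial ((c * ((n k : ℕ) : ℚ)).num.toNat) : ℝ)
          * (Nat.factorial ((b * ((n k : ℕ) : ℚ)).num.toNat - (c * ((n k : ℕ) : ℚ)).num.toNat) : ℝ)
          = (Nat.factorial ((b * ((n k : ℕ) : ℚ)).num.toNat) : ℝ) := by exact_mod_cast hmul
      have hch : ((Nat.choose ((b * ((n k : ℕ) : ℚ)).num.toNat) ((c * ((n k : ℕ) : ℚ)).num.toNat) : ℕ) : ℝ) ≠ 0 := by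
        exact_mod_cast (Nat.choose_pos h5).ne'
      have hf1 : ((Nat.factorial ((c * ((n k : ℕ) : ℚ)).num.toNat) : ℕ) : ℝ) ≠ 0 := by
        exact_mod_cast (Nat.factorial_pos _).ne'
      have hf2 : ((Nat.factorial ((b * ((n k : ℕ) : ℚ)).num.toNat - (c * ((n k : ℕ) : ℚ)).num.toNat) : ℕ) : ℝ) ≠ 0 := by
        exact_mod_cast (Nat.factorial_pos _).ne'
      rw [← hmulR, Real.log_mul (mul_ne_zero hch hf1) hf2, Real.log_mul hch hf1]
      ring
    rw [d1, d2, h1, h2, h6, h7, hacR, hbcR,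
      Real.log_mul haR.ne' hν.ne', Real.log_mul hbR.ne' hν.ne',
      Real.log_mul hxz.ne' hν.ne', Real.log_mul hyz.ne' hν.ne']
    set ν : ℝ := ((n k : ℕ) : ℝ) with hνdef
    set F1 : ℝ := Real.log ((Nat.factorial ((a * ((n k : ℕ) : ℚ)).num.toNat) : ℕ) : ℝ) with hF1
    set F2 : ℝ := Real.log ((Nat.factorial ((c * ((n k : ℕ) : ℚ)).num.toNat) : ℕ) : ℝ) with hF2
    set F3 : ℝ := Real.log ((Nat.factorial ((a * ((n k : ℕ) : ℚ)).num.toNat - (c * ((n k : ℕ) : ℚ)).num.toNat) : ℕ) : ℝ) with hF3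
    set F4 : ℝ := Real.log ((Nat.factorial ((b * ((n k : ℕ) : ℚ)).num.toNat) : ℕ) : ℝ) with hF4
    set F5 : ℝ := Real.log ((Nat.factorial ((b * ((n k : ℕ) : ℚ)).num.toNat - (c * ((n k : ℕ) : ℚ)).num.toNat) : ℕ) : ℝ) with hF5
    have hνne : ν ≠ 0 := hν.ne'
    rw [div_sub_div_same, div_sub_div_same, ← add_div, eq_div_iff hνne, add_mul,
      div_mul_cancel₀ _ hνne]
    ring
end

section
/- Let X ⊂ A^G be a subshift, F ⊂ G finite, v, w ∈ L_F(X), u' a configuration, T a left F-sparse subset of O_v(u), and m ≤ |T ∩ O_w(u')|. Then the number of pairs (u, S) with S left F-sparse, |S| = m, S ⊆ T, and u' = R_u^{v→w}(S), is at most the binomial coefficient C(|T ∩ O_w(u')|, m). -/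
open scoped Pointwise

section Preamble

variable {G A : Type*}

/-- The left-translation (shift) action on configurations. -/
def shiftMap [Group G] (g : G) (x : G → A) : G → A := fun h => x (g * h)

/-- A subshift: a closed, shift-invariant subset of `A^G`. -/
def IsSubshift [Group G] [TopologicalSpace A] (X : Set (G → A)) : Prop :=
  IsClosed X ∧ ∀ g : G, ∀ x ∈ X, shiftMap g x ∈ X

/-- Concatenation: agrees with `v` on `F` and with `η` off `F`. -/
def concatOn [Group G] [DecidableEq G] (F : Finset G) (v η : G → A) : G → A :=
  fun g => if g ∈ F then v g else η g

/-- `v` is a legal configuration of shape `F` in `X`. -/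
def inLang [Group G] (X : Set (G → A)) (F : Finset G) (v : G → A) : Prop :=
  ∃ x ∈ X, ∀ g ∈ F, x g = v g

/-- The extender set of the configuration `v` of shape `F`. -/
def extSet [Group G] [DecidableEq G] (X : Set (G → A)) (F : Finset G) (v : G → A) :
    Set (G → A) :=
  {η | concatOn F v η ∈ X}

/-- The cylinder set of the configuration `v` of shape `F` (inside `X`). -/
def cylSet [Group G] (X : Set (G → A)) (F : Finset G) (v : G → A) : Set (G → A) :=
  {x ∈ X | ∀ g ∈ F, x g = v g}

open Classical in
/-- The map swapping `v` and `w` in the `F` location whenever the result stays in `X`. -/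
noncomputable def xiMap [Group G] [DecidableEq G] (X : Set (G → A)) (F : Finset G)
    (v w : G → A) (x : G → A) : G → A :=
  if (∀ g ∈ F, x g = v g) ∧ concatOn F w x ∈ X then concatOn F w x
  else if (∀ g ∈ F, x g = w g) ∧ concatOn F v x ∈ X then concatOn F v x
  else x

/-- `S` is left `F`-sparse: the translates `sF`, `s ∈ S`, are pairwise disjoint. -/
def leftSparse [Group G] (F : Finset G) (S : Set G) : Prop :=
  ∀ s ∈ S, ∀ s' ∈ S, s ≠ s' → ∀ f ∈ F, ∀ f' ∈ F, s * f ≠ s' * f'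

/-- Occurrences of the shape-`F` configuration `v` in the shape-`H` configuration `u`. -/
def occurSet [Group G] (F H : Finset G) (v u : G → A) : Set G :=
  {g | (∀ f ∈ F, g * f ∈ H) ∧ ∀ f ∈ F, u (g * f) = v f}

open Classical in
/-- Replace the occurrences at locations in `S` by the shape-`F` configuration `w`. -/
noncomputable def replaceCfg [Group G] (F : Finset G) (w u : G → A) (S : Set G) : G → A :=
  fun h => if hs : ∃ s, s ∈ S ∧ s⁻¹ * h ∈ F then w ((Classical.choose hs)⁻¹ * h) else u h

/-- The `E`-variation of `φ` on `X`. -/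
noncomputable def varOn [Group G] (X : Set (G → A)) (φ : (G → A) → ℝ) (E : Finset G) : ℝ :=
  sSup {r | ∃ x ∈ X, ∃ y ∈ X, (∀ g ∈ E, x g = y g) ∧ r = φ x - φ y}

/-- An exhaustive sequence of finite subsets of `G`. -/
def exhaustive [Group G] (E : ℕ → Finset G) : Prop :=
  Monotone E ∧ ∀ g : G, ∃ n, g ∈ E n

/-- The summable variation norm of `φ` according to the exhaustive sequence `E`. -/
noncomputable def svNorm [Group G] [DecidableEq G] (X : Set (G → A)) (φ : (G → A) → ℝ)
    (E : ℕ → Finset G) : ℝ :=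
  2 * (E 0).card * sSup {r | ∃ x ∈ X, r = |φ x|} +
    ∑' n : ℕ, (((E (n + 1))⁻¹ \ (E n)⁻¹).card : ℝ) * varOn X φ (E n)

end Preamble

/-- The number of pairs `(u, S)` with `S` left `F`-sparse, `|S| = m`, `S ⊆ T ⊆ O_v(u)`, and
`u' = R_u^{v→w}(S)` is at most `C(|T ∩ O_w(u')|, m)`. -/
theorem stmt8 {G A : Type*} [Group G] [Countable G] [DecidableEq G]
    (X : Set (G → A)) (F H : Finset G) (v w : G → A)
    (hv : inLang X F v) (hw : inLang X F w)
    (u' : G → A) (T : Set G) (hsp : leftSparse F T)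
    (m : ℕ) (hm : m ≤ (T ∩ occurSet F H w u').ncard) :
    Set.ncard {p : (G → A) × Set G |
        leftSparse F p.2 ∧ p.2.ncard = m ∧ p.2 ⊆ T ∧ p.2 ⊆ occurSet F H v p.1 ∧
          u' = replaceCfg F w p.1 p.2} ≤
      Nat.choose ((T ∩ occurSet F H w u').ncard) m := by
  classical
  set K := T ∩ occurSet F H w u' with hKdef
  set P := {p : (G → A) × Set G |
      leftSparse F p.2 ∧ p.2.ncard = m ∧ p.2 ⊆ T ∧ p.2 ⊆ occurSet F H v p.1 ∧
        u' = replaceCfg F w p.1 p.2} with hPdef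
  -- key facts about members of P
  have hrep : ∀ p ∈ P, ∀ s ∈ p.2, ∀ f ∈ F, u' (s * f) = w f := by
    rintro p ⟨hps, hpm, hpT, hpv, hpu⟩ s hs f hf
    rw [hpu]
    unfold replaceCfg
    have hex : ∃ s', s' ∈ p.2 ∧ s'⁻¹ * (s * f) ∈ F := ⟨s, hs, by group; exact hf⟩
    rw [dif_pos hex]
    obtain ⟨hs₀, hf₀⟩ := Classical.choose_spec hex
    set s₀ := Classical.choose hex with hs₀def
    have : s₀ = s := by
      by_contra hne
      exact hsp s₀ (hpT hs₀) s (hpT hs) hne _ hf₀ f hf (by group)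
    rw [this]
    congr 1
    group
  have hocc : ∀ p ∈ P, p.2 ⊆ K := by
    rintro p hp s hs
    obtain ⟨hps, hpm, hpT, hpv, hpu⟩ := hp
    exact ⟨hpT hs, fun f hf => (hpv hs).1 f hf, fun f hf => hrep p ⟨hps, hpm, hpT, hpv, hpu⟩ s hs f hf⟩
  have hinj : Set.InjOn Prod.snd P := by
    rintro ⟨u₁, S₁⟩ hp ⟨u₂, S₂⟩ hq (hS : S₁ = S₂)
    subst hS
    obtain ⟨_, _, _, hp_v, hp_u⟩ := hp
    obtain ⟨_, _, _, hq_v, hq_u⟩ := hq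
    have : u₁ = u₂ := by
      funext h
      by_cases hex : ∃ s, s ∈ S₁ ∧ s⁻¹ * h ∈ F
      · obtain ⟨s, hs, hf⟩ := hex
        have e1 : u₁ (s * (s⁻¹ * h)) = v (s⁻¹ * h) := (hp_v hs).2 _ hf
        have e2 : u₂ (s * (s⁻¹ * h)) = v (s⁻¹ * h) := (hq_v hs).2 _ hf
        have hsh : s * (s⁻¹ * h) = h := by group
        rw [hsh] at e1 e2
        rw [e1, e2]
      · have e1 : u' h = u₁ h := by rw [hp_u]; unfold replaceCfg; rw [dif_neg hex]
        have e2 : u' h = u₂ h := by rw [hq_u]; unfold replaceCfg; rw [dif_neg hex]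
        rw [← e1, ← e2]
    rw [this]
  by_cases hKfin : K.Finite
  · -- finite case: inject into powersetCard
    have key : P.ncard ≤
        Set.ncard ((fun s : Finset G => (↑s : Set G)) '' ↑(hKfin.toFinset.powersetCard m)) := by
      apply Set.ncard_le_ncard_of_injOn Prod.snd
      · intro p hp
        have hsubK : p.2 ⊆ K := hocc p hp
        have hfin : p.2.Finite := hKfin.subset hsubK
        refine ⟨hfin.toFinset, ?_, by simp⟩
        rw [Finset.mem_coe, Finset.mem_powersetCard]
        constructor
        · intro x hx
          rw [Set.Finite.mem_toFinset]
          exact hsubK (by rwa [Set.Finite.mem_toFinset] at hx)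
        · rw [← Set.ncard_eq_toFinset_card _ hfin]
          exact hp.2.1
      · exact hinj
    rw [Set.ncard_image_of_injective _ Finset.coe_injective, Set.ncard_coe_finset,
      Finset.card_powersetCard, ← Set.ncard_eq_toFinset_card _ hKfin] at key
    exact key
  · -- infinite case: m = 0 and P is infinite, so ncard P = 0
    have hKinf : K.Infinite := hKfin
    have hm0 : m = 0 := by
      have := hKinf.ncard
      omega
    have hF : F = ∅ := by
      by_contra hF
      obtain ⟨f₀, hf₀⟩ := Finset.nonempty_iff_ne_empty.2 hF
      apply hKfin
      apply Set.Finite.subset (Set.Finite.preimage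
        (Function.Injective.injOn (mul_left_injective f₀)) H.finite_toSet)
      intro g hg
      exact hg.2.1 f₀ hf₀
    have hPinf : P.Infinite := by
      apply Set.infinite_of_injOn_mapsTo
        (f := fun x => ((u', K \ {x}) : (G → A) × Set G)) (s := K) _ _ hKinf
      · intro x hx y hy hxy
        simp only [Prod.mk.injEq] at hxy
        have := hxy.2
        by_contra hne
        have hxmem : x ∈ K \ {x} := by rw [this]; exact ⟨hx, by simp [hne]⟩
        simp at hxmem
      · intro x hx
        refine ⟨?_, ?_, ?_, ?_, ?_⟩
        · intro s hs s' hs' hne f hf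
          simp [hF] at hf
        · rw [hm0]
          exact (hKinf.diff (Set.finite_singleton x)).ncard
        · exact fun y hy => hy.1.1
        · intro y hy
          exact ⟨fun f hf => absurd hf (by simp [hF]), fun f hf => absurd hf (by simp [hF])⟩
        · funext h
          unfold replaceCfg
          rw [dif_neg]
          rintro ⟨s, hs, hsf⟩
          simp [hF] at hsf
    rw [hPinf.ncard]
    exact Nat.zero_le _
end

section
/- Let X ⊂ A^G be a subshift, F ⊂ G finite, v, w ∈ L_F(X) with E_X(v) ⊂ E_X(w). Then for any configuration u ∈ L(X) and any left F-sparse set S ⊂ O_v(u), the replaced configuration R_u^{v→w}(S) is also in the language L(X). -/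
open scoped Pointwise

section Aux

variable {G A : Type*} [Group G] [DecidableEq G]

/-- Value of `replaceCfg` at a point covered by a (unique) occurrence location. -/
lemma replaceCfg_pos (F : Finset G) (w z : G → A) (S : Set G) (h : G)
    (s : G) (hsS : s ∈ S) (hf : s⁻¹ * h ∈ F)
    (uniq : ∀ s' ∈ S, s'⁻¹ * h ∈ F → s' = s) :
    replaceCfg F w z S h = w (s⁻¹ * h) := by
  have hs : ∃ s', s' ∈ S ∧ s'⁻¹ * h ∈ F := ⟨s, hsS, hf⟩
  rw [replaceCfg, dif_pos hs]
  have hspec := Classical.choose_spec hs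
  rw [uniq _ hspec.1 hspec.2]

lemma replaceCfg_neg (F : Finset G) (w z : G → A) (S : Set G) (h : G)
    (hn : ¬ ∃ s, s ∈ S ∧ s⁻¹ * h ∈ F) :
    replaceCfg F w z S h = z h := by
  rw [replaceCfg, dif_neg hn]

/-- Sparseness gives uniqueness of the covering occurrence. -/
lemma sparse_uniq {F : Finset G} {S : Set G} (hsp : leftSparse F S)
    {s s' : G} (hs : s ∈ S) (hs' : s' ∈ S) {h : G}
    (hf : s⁻¹ * h ∈ F) (hf' : s'⁻¹ * h ∈ F) : s = s' := by
  by_contra hne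
  exact hsp s hs s' hs' hne _ hf _ hf' (by simp)

/-- Single replacement stays in `X`. -/
lemma single_rep [TopologicalSpace A] {X : Set (G → A)} (hX : IsSubshift X)
    {F : Finset G} {v w : G → A} (hext : extSet X F v ⊆ extSet X F w)
    {x : G → A} (hx : x ∈ X) (s : G) (hocc : ∀ f ∈ F, x (s * f) = v f) :
    (fun h => if s⁻¹ * h ∈ F then w (s⁻¹ * h) else x h) ∈ X := by
  have h1 : shiftMap s x ∈ X := hX.2 s x hx
  have h2 : concatOn F v (shiftMap s x) = shiftMap s x := by
    funext g
    by_cases hg : g ∈ F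
    · simp [concatOn, hg, shiftMap, hocc g hg]
    · simp [concatOn, hg]
  have h3 : shiftMap s x ∈ extSet X F v := by
    rw [extSet, Set.mem_setOf_eq, h2]; exact h1
  have h4 : concatOn F w (shiftMap s x) ∈ X := hext h3
  have h5 := hX.2 s⁻¹ _ h4
  convert h5 using 1
  funext h
  by_cases hh : s⁻¹ * h ∈ F
  · simp [shiftMap, concatOn, hh]
  · simp [shiftMap, concatOn, hh]

/-- Finite replacement stays in `X`. -/
lemma finite_rep [TopologicalSpace A] {X : Set (G → A)} (hX : IsSubshift X)
    {F : Finset G} {v w : G → A} (hext : extSet X F v ⊆ extSet X F w)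
    {S : Set G} (hsp : leftSparse F S)
    {x : G → A} (hx : x ∈ X) (hocc : ∀ s ∈ S, ∀ f ∈ F, x (s * f) = v f)
    (T : Finset G) (hTS : ↑T ⊆ S) :
    replaceCfg F w x (↑T : Set G) ∈ X := by
  induction T using Finset.induction_on with
  | empty =>
      have : replaceCfg F w x (↑(∅ : Finset G) : Set G) = x := by
        funext h
        exact replaceCfg_neg _ _ _ _ _ (by simp)
      rwa [this]
  | @insert a T haT ih =>
      have haS : a ∈ S := hTS (by simp)
      have hTS' : (↑T : Set G) ⊆ S := fun t ht => hTS (by simp [ht])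
      have hxT := ih hTS'
      -- occurrence of v at a survives in the partially replaced configuration
      have hsurv : ∀ f ∈ F, replaceCfg F w x (↑T : Set G) (a * f) = v f := by
        intro f hf
        have hn : ¬ ∃ s, s ∈ (↑T : Set G) ∧ s⁻¹ * (a * f) ∈ F := by
          rintro ⟨s, hsT, hsf⟩
          have hsS : s ∈ S := hTS' hsT
          have : s = a := sparse_uniq hsp hsS haS hsf (by simpa using hf)
          exact haT (by rwa [this] at hsT)
        rw [replaceCfg_neg _ _ _ _ _ hn]
        exact hocc a haS f hf
      have hz := single_rep hX hext hxT a hsurv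
      have heq : (fun h => if a⁻¹ * h ∈ F then w (a⁻¹ * h)
            else replaceCfg F w x (↑T : Set G) h)
          = replaceCfg F w x (↑(insert a T) : Set G) := by
        funext h
        by_cases ha : a⁻¹ * h ∈ F
        · rw [if_pos ha, replaceCfg_pos _ _ _ _ _ a (by simp) ha]
          intro s' hs' hf'
          exact (sparse_uniq hsp (hTS hs') haS hf' ha)
        · rw [if_neg ha]
          by_cases hb : ∃ s, s ∈ (↑(insert a T) : Set G) ∧ s⁻¹ * h ∈ F
          · obtain ⟨s, hsmem, hsf⟩ := hb
            have hsT : s ∈ T := by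
              rcases Finset.mem_insert.mp (by exact_mod_cast hsmem) with h1 | h1
              · exact absurd (h1 ▸ hsf) ha
              · exact h1
            rw [replaceCfg_pos _ _ _ _ _ s (by exact_mod_cast hsT) hsf
              (fun s' hs' hf' => sparse_uniq hsp (hTS' hs') (hTS' hsT) hf' hsf),
              replaceCfg_pos _ _ _ _ _ s (by exact_mod_cast Finset.mem_insert_of_mem hsT) hsf
              (fun s' hs' hf' => sparse_uniq hsp (hTS hs') (hTS' hsT) hf' hsf)]
          · rw [replaceCfg_neg _ _ _ _ _ hb,
              replaceCfg_neg _ _ _ _ _ (fun ⟨s, hsT, hsf⟩ => hb ⟨s, by simp [hsT], hsf⟩)]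
      rwa [heq] at hz

/-- Infinite replacement stays in `X` (limit argument). -/
lemma infinite_rep [Countable G] [TopologicalSpace A] [DiscreteTopology A]
    {X : Set (G → A)} (hX : IsSubshift X)
    {F : Finset G} {v w : G → A} (hext : extSet X F v ⊆ extSet X F w)
    {S : Set G} (hsp : leftSparse F S)
    {x : G → A} (hx : x ∈ X) (hocc : ∀ s ∈ S, ∀ f ∈ F, x (s * f) = v f) :
    replaceCfg F w x S ∈ X := by
  have : Nonempty G := ⟨1⟩
  obtain ⟨e, he⟩ := exists_surjective_nat G
  classical
  set T : ℕ → Finset G := fun n => (Finset.range (n + 1)).filter (fun k => e k ∈ S) |>.image e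
    with hT
  have hTS : ∀ n, (↑(T n) : Set G) ⊆ S := by
    intro n t ht
    simp only [hT, Finset.coe_image, Set.mem_image, Finset.mem_coe, Finset.mem_filter] at ht
    obtain ⟨k, ⟨_, hk⟩, rfl⟩ := ht
    exact hk
  have hmem : ∀ n, replaceCfg F w x (↑(T n) : Set G) ∈ X :=
    fun n => finite_rep hX hext hsp hx hocc (T n) (hTS n)
  have htend : Filter.Tendsto (fun n => replaceCfg F w x (↑(T n) : Set G))
      Filter.atTop (nhds (replaceCfg F w x S)) := by
    rw [tendsto_pi_nhds]
    intro h
    by_cases hb : ∃ s, s ∈ S ∧ s⁻¹ * h ∈ F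
    · obtain ⟨s, hsS, hsf⟩ := hb
      obtain ⟨k, rfl⟩ := he s
      have hval : replaceCfg F w x S h = w ((e k)⁻¹ * h) :=
        replaceCfg_pos _ _ _ _ _ _ hsS hsf
          (fun s' hs' hf' => sparse_uniq hsp hs' hsS hf' hsf)
      rw [hval]
      apply tendsto_nhds_of_eventually_eq
      filter_upwards [Filter.eventually_ge_atTop k] with n hn
      have hkT : e k ∈ (↑(T n) : Set G) := by
        simp only [hT, Finset.coe_image, Set.mem_image, Finset.mem_coe, Finset.mem_filter]
        exact ⟨k, ⟨Finset.mem_range.mpr (by omega), hsS⟩, rfl⟩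
      exact replaceCfg_pos _ _ _ _ _ _ hkT hsf
        (fun s' hs' hf' => sparse_uniq hsp (hTS n hs') hsS hf' hsf)
    · have hval : replaceCfg F w x S h = x h := replaceCfg_neg _ _ _ _ _ hb
      rw [hval]
      apply tendsto_nhds_of_eventually_eq
      filter_upwards with n
      exact replaceCfg_neg _ _ _ _ _
        (fun ⟨s, hsT, hsf⟩ => hb ⟨s, hTS n hsT, hsf⟩)
  exact hX.1.mem_of_tendsto htend (Filter.Eventually.of_forall hmem)

end Aux

/-- If `E_X(v) ⊆ E_X(w)`, then replacing `v` by `w` along any left `F`-sparse set of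
occurrences of `v` in a legal configuration `u` yields a legal configuration. -/
theorem stmt9 {G A : Type*} [Group G] [Countable G] [DecidableEq G]
    [TopologicalSpace A] [Finite A] [DiscreteTopology A]
    (X : Set (G → A)) (hX : IsSubshift X)
    (F : Finset G) (v w : G → A) (hv : inLang X F v) (hw : inLang X F w)
    (hext : extSet X F v ⊆ extSet X F w)
    (H : Finset G) (u : G → A) (hu : inLang X H u)
    (S : Set G) (hS : S ⊆ occurSet F H v u) (hsp : leftSparse F S) :
    inLang X H (replaceCfg F w u S) := by
  obtain ⟨x, hx, hxu⟩ := hu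
  have hocc : ∀ s ∈ S, ∀ f ∈ F, x (s * f) = v f := by
    intro s hs f hf
    obtain ⟨hmem, hval⟩ := hS hs
    rw [hxu _ (hmem f hf)]
    exact hval f hf
  refine ⟨replaceCfg F w x S, infinite_rep hX hext hsp hx hocc, ?_⟩
  intro g hg
  by_cases hb : ∃ s, s ∈ S ∧ s⁻¹ * g ∈ F
  · obtain ⟨s, hsS, hsf⟩ := hb
    rw [replaceCfg_pos _ _ _ _ _ s hsS hsf
        (fun s' hs' hf' => sparse_uniq hsp hs' hsS hf' hsf),
      replaceCfg_pos _ _ _ _ _ s hsS hsf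
        (fun s' hs' hf' => sparse_uniq hsp hs' hsS hf' hsf)]
  · rw [replaceCfg_neg _ _ _ _ _ hb, replaceCfg_neg _ _ _ _ _ hb]
    exact hxu g hg
end

section
/- Let X ⊂ A^G be a subshift, F ⊂ G finite, and v, w ∈ L_F(X) with equal extender sets E_X(v) = E_X(w). Then ξ_{v,w}: X → X is a homeomorphism of X. -/
open scoped Pointwise

/-- If `E_X(v) = E_X(w)`, then `ξ_{v,w}` is a homeomorphism of `X`. -/
theorem stmt11 {G A : Type*} [Group G] [Countable G] [DecidableEq G]
    [TopologicalSpace A] [Fintype A] [DiscreteTopology A]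
    (X : Set (G → A)) (hX : IsSubshift X)
    (F : Finset G) (v w : G → A) (hv : inLang X F v) (hw : inLang X F w)
    (hext : extSet X F v = extSet X F w) :
    ∃ h : X ≃ₜ X, ∀ x : X, (h x : G → A) = xiMap X F v w x := by
  classical
  -- key consequences of extender-set equality
  have hA : ∀ x ∈ X, (∀ g ∈ F, x g = v g) → concatOn F w x ∈ X := by
    intro x hx hxv
    have hxeq : concatOn F v x = x := by
      funext g; unfold concatOn; split
      · exact (hxv g ‹_›).symm
      · rfl
    have : x ∈ extSet X F v := by simpa [extSet, hxeq] using hx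
    rw [hext] at this; exact this
  have hB : ∀ x ∈ X, (∀ g ∈ F, x g = w g) → concatOn F v x ∈ X := by
    intro x hx hxw
    have hxeq : concatOn F w x = x := by
      funext g; unfold concatOn; split
      · exact (hxw g ‹_›).symm
      · rfl
    have : x ∈ extSet X F w := by simpa [extSet, hxeq] using hx
    rw [← hext] at this; exact this
  -- the simplified map
  set ξ : (G → A) → (G → A) := fun x =>
    if ∀ g ∈ F, x g = v g then concatOn F w x
    else if ∀ g ∈ F, x g = w g then concatOn F v x else x with hξ
  have hconcat_mem : ∀ (u : G → A) (x : G → A), ∀ g ∈ F, concatOn F u x g = u g := by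
    intro u x g hg; simp [concatOn, hg]
  have hconcat_nmem : ∀ (u : G → A) (x : G → A), ∀ g, g ∉ F → concatOn F u x g = x g := by
    intro u x g hg; simp [concatOn, hg]
  have hξdef : ∀ y : G → A, ξ y =
      if ∀ g ∈ F, y g = v g then concatOn F w y
      else if ∀ g ∈ F, y g = w g then concatOn F v y else y := fun _ => rfl
  have hxi : ∀ x ∈ X, xiMap X F v w x = ξ x := by
    intro x hx
    unfold xiMap
    rw [hξdef x]
    by_cases h1 : ∀ g ∈ F, x g = v g
    · rw [if_pos ⟨h1, hA x hx h1⟩, if_pos h1]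
    · rw [if_neg (fun h => h1 h.1), if_neg h1]
      by_cases h2 : ∀ g ∈ F, x g = w g
      · rw [if_pos ⟨h2, hB x hx h2⟩, if_pos h2]
      · rw [if_neg (fun h => h2 h.1), if_neg h2]
  have hmem : ∀ x ∈ X, ξ x ∈ X := by
    intro x hx
    rw [hξdef x]
    split
    · exact hA x hx ‹_›
    · split
      · exact hB x hx ‹_›
      · exact hx
  have hinv : ∀ x : G → A, ξ (ξ x) = x := by
    intro x
    rw [hξdef (ξ x), hξdef x]
    by_cases h1 : ∀ g ∈ F, x g = v g
    · rw [if_pos h1]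
      by_cases h3 : ∀ g ∈ F, concatOn F w x g = v g
      · rw [if_pos h3]
        funext g
        by_cases hg : g ∈ F
        · rw [hconcat_mem, h1 g hg]
          have := h3 g hg; rw [hconcat_mem w x g hg] at this
          rw [this]; exact hg
        · rw [hconcat_nmem _ _ _ hg, hconcat_nmem _ _ _ hg]
      · rw [if_neg h3, if_pos (fun g hg => hconcat_mem w x g hg)]
        funext g
        by_cases hg : g ∈ F
        · rw [hconcat_mem _ _ _ hg, h1 g hg]
        · rw [hconcat_nmem _ _ _ hg, hconcat_nmem _ _ _ hg]
    · rw [if_neg h1]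
      by_cases h2 : ∀ g ∈ F, x g = w g
      · rw [if_pos h2, if_pos (fun g hg => hconcat_mem v x g hg)]
        funext g
        by_cases hg : g ∈ F
        · rw [hconcat_mem _ _ _ hg, h2 g hg]
        · rw [hconcat_nmem _ _ _ hg, hconcat_nmem _ _ _ hg]
      · rw [if_neg h2, if_neg h1, if_neg h2]
  -- continuity
  have hclopen : ∀ u : G → A, IsClopen {x : X | ∀ g ∈ F, (x : G → A) g = u g} := by
    intro u
    have : {x : X | ∀ g ∈ F, (x : G → A) g = u g}
        = ⋂ g ∈ F, (fun x : X => (x : G → A) g) ⁻¹' {u g} := by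
      ext x; simp
    rw [this]
    exact isClopen_biInter_finset fun g _ =>
      (isClopen_discrete _).preimage ((continuous_apply g).comp continuous_subtype_val)
  have hcontconcat : ∀ u : G → A, Continuous (fun x : X => concatOn F u (x : G → A)) := by
    intro u
    apply continuous_pi
    intro g
    by_cases hg : g ∈ F
    · simpa [concatOn, hg] using (continuous_const : Continuous fun _ : X => u g)
    · simpa [concatOn, hg] using (show Continuous fun x : X => (x : G → A) g from
        (continuous_apply g).comp continuous_subtype_val)
  have hcont : Continuous (fun x : X => ξ (x : G → A)) := by
    rw [hξ]; dsimp only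
    apply Continuous.if
    · intro a ha
      rw [(hclopen v).frontier_eq] at ha
      exact absurd ha (Set.notMem_empty a)
    · exact hcontconcat w
    · apply Continuous.if
      · intro a ha
        rw [(hclopen w).frontier_eq] at ha
        exact absurd ha (Set.notMem_empty a)
      · exact hcontconcat v
      · exact continuous_subtype_val
  refine ⟨{ toFun := fun x => ⟨ξ x, hmem x x.2⟩
            invFun := fun x => ⟨ξ x, hmem x x.2⟩
            left_inv := fun x => Subtype.ext (hinv x)
            right_inv := fun x => Subtype.ext (hinv x)
            continuous_toFun := hcont.subtype_mk _
            continuous_invFun := hcont.subtype_mk _ }, fun x => (hxi x x.2).symm⟩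
end

section
/- Let G be a countable group, X ⊂ A^G a subshift, {E_n} an exhaustive sequence, and φ ∈ SV_{{E_n}}(X) a potential with summable variation. Then for any finite F ⊂ G, any v, w ∈ L_F(X), and any x ∈ [v], the sum ∑_{g∈G} |φ(σ_g(x)) − φ(σ_g(ξ_{v,w}(x)))| converges and is at most |F| · ‖φ‖_{SV_{{E_n}}}, where ‖φ‖_{SV_{{E_n}}} = 2|E_1|·‖φ‖_∞ + ∑_n |E_{n+1}^{-1} \ E_n^{-1}|·Var_{E_n}(φ). -/
open scoped Pointwise

/-- For `φ` with summable variation, the cocycle sum along `ξ_{v,w}` converges absolutely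
and is bounded by `|F| · ‖φ‖_{SV}`. -/
theorem stmt14 {G A : Type*} [Group G] [Countable G] [DecidableEq G]
    [TopologicalSpace A] [Fintype A] [DiscreteTopology A]
    (X : Set (G → A)) (hX : IsSubshift X) (hXne : X.Nonempty)
    (φ : (G → A) → ℝ) (hφ : ContinuousOn φ X)
    (E : ℕ → Finset G) (hE : exhaustive E)
    (hsv : Summable fun n : ℕ => (((E (n + 1))⁻¹ \ (E n)⁻¹).card : ℝ) * varOn X φ (E n))
    (F : Finset G) (v w : G → A) (hv : inLang X F v) (hw : inLang X F w)
    (x : G → A) (hx : x ∈ cylSet X F v) :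
    (Summable fun g : G => |φ (shiftMap g x) - φ (shiftMap g (xiMap X F v w x))|) ∧
      (∑' g : G, |φ (shiftMap g x) - φ (shiftMap g (xiMap X F v w x))|) ≤
        (F.card : ℝ) * svNorm X φ E := by
  classical
  obtain ⟨hXclosed, hXshift⟩ := hX
  obtain ⟨hxX, hxv⟩ := hx
  have hξX : xiMap X F v w x ∈ X := by
    unfold xiMap
    split_ifs with h1 h2
    · exact h1.2
    · exact h2.2
    · exact hxX
  have hξoff : ∀ g : G, g ∉ F → xiMap X F v w x g = x g := by
    intro g hg
    unfold xiMap
    split_ifs with h1 h2 <;> simp [concatOn, hg]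
  set ξ := xiMap X F v w x with hξ
  set T : G → ℝ := fun g => |φ (shiftMap g x) - φ (shiftMap g ξ)| with hT
  -- boundedness of φ on X
  have hXcomp : IsCompact X := hXclosed.isCompact
  set B := sSup {r | ∃ y ∈ X, r = |φ y|} with hBdef
  have hset : {r | ∃ y ∈ X, r = |φ y|} = (fun y => |φ y|) '' X := by
    ext r; simp [eq_comm]
  have himg : IsCompact ((fun y => |φ y|) '' X) :=
    hXcomp.image_of_continuousOn hφ.abs
  have hBle : ∀ y ∈ X, |φ y| ≤ B := fun y hy =>
    le_csSup (hset ▸ himg.bddAbove) ⟨y, hy, rfl⟩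
  have hB0 : 0 ≤ B := le_trans (abs_nonneg _) (hBle x hxX)
  -- variation facts
  have hvb : ∀ n : ℕ,
      BddAbove {r | ∃ a ∈ X, ∃ b ∈ X, (∀ g ∈ E n, a g = b g) ∧ r = φ a - φ b} := by
    intro n
    refine ⟨2 * B, ?_⟩
    rintro r ⟨a, ha, b, hb, -, rfl⟩
    have h1 := hBle a ha
    have h2 := hBle b hb
    have h3 := le_abs_self (φ a)
    have h4 := neg_abs_le (φ b)
    linarith
  have hvnn : ∀ n, 0 ≤ varOn X φ (E n) := by
    intro n
    exact le_csSup (hvb n) ⟨x, hxX, x, hxX, fun _ _ => rfl, by ring⟩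
  have hvle : ∀ n, ∀ a ∈ X, ∀ b ∈ X, (∀ g ∈ E n, a g = b g) →
      |φ a - φ b| ≤ varOn X φ (E n) := by
    intro n a ha b hb hab
    rw [abs_sub_le_iff]
    constructor
    · exact le_csSup (hvb n) ⟨a, ha, b, hb, hab, rfl⟩
    · exact le_csSup (hvb n) ⟨b, hb, a, ha, fun g hg => (hab g hg).symm, rfl⟩
  have hT2B : ∀ g, T g ≤ 2 * B := by
    intro g
    have h1 := abs_le.mp (hBle _ (hXshift g x hxX))
    have h2 := abs_le.mp (hBle _ (hXshift g ξ hξX))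
    simp only [hT]
    rw [abs_sub_le_iff]
    constructor <;> linarith [h1.1, h1.2, h2.1, h2.2]
  have hTnn : ∀ g, 0 ≤ T g := fun g => abs_nonneg _
  rcases F.eq_empty_or_nonempty with hF | hFne
  · subst hF
    have hξx : ξ = x := by
      rw [hξ]
      unfold xiMap
      have hc : concatOn (∅ : Finset G) w x = x := by
        funext g; simp [concatOn]
      have hc' : concatOn (∅ : Finset G) v x = x := by
        funext g; simp [concatOn]
      split_ifs with h1 h2 <;> simp [hc, hc']
    have hT0 : T = fun _ => 0 := by
      funext g; simp [hT, hξx]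
    rw [hT0]
    refine ⟨summable_zero, ?_⟩
    simp
  obtain ⟨f0, hf0⟩ := hFne
  have hPex : ∀ g : G, ∃ n, ∃ h ∈ E n, g * h ∈ F := by
    intro g
    obtain ⟨m, hm⟩ := hE.2 (g⁻¹ * f0)
    exact ⟨m, g⁻¹ * f0, hm, by simpa using hf0⟩
  set ι : G → ℕ := fun g => Nat.find (hPex g) with hι
  have hιspec : ∀ g, ∃ h ∈ E (ι g), g * h ∈ F := fun g => Nat.find_spec (hPex g)
  have hιmin : ∀ g n, n < ι g → ∀ h ∈ E n, g * h ∉ F := by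
    intro g n hn h hh hgh
    exact Nat.find_min (hPex g) hn ⟨h, hh, hgh⟩
  set S : ℕ → Finset G := fun n =>
    (F ×ˢ (E (n + 1) \ E n)).image (fun p => p.1 * p.2⁻¹) with hS
  set S0 : Finset G := (F ×ˢ E 0).image (fun p => p.1 * p.2⁻¹) with hS0
  have hmem0 : ∀ g, ι g = 0 → g ∈ S0 := by
    intro g hg
    obtain ⟨h, hh, hgh⟩ := hιspec g
    rw [hg] at hh
    exact Finset.mem_image.mpr ⟨(g * h, h), Finset.mem_product.mpr ⟨hgh, hh⟩, by group⟩
  have hmemS : ∀ g n, ι g = n + 1 → g ∈ S n := by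
    intro g n hg
    obtain ⟨h, hh, hgh⟩ := hιspec g
    rw [hg] at hh
    have hh' : h ∉ E n := fun hc =>
      hιmin g n (by rw [hg]; exact Nat.lt_succ_self n) h hc hgh
    exact Finset.mem_image.mpr
      ⟨(g * h, h), Finset.mem_product.mpr ⟨hgh, Finset.mem_sdiff.mpr ⟨hh, hh'⟩⟩, by group⟩
  have hcard0 : ((S0.card : ℝ)) ≤ (F.card : ℝ) * (E 0).card := by
    have h1 : S0.card ≤ F.card * (E 0).card :=
      (Finset.card_image_le).trans_eq (Finset.card_product _ _)
    exact_mod_cast h1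
  have hcardS : ∀ n, ((S n).card : ℝ) ≤ (F.card : ℝ) * (((E (n + 1))⁻¹ \ (E n)⁻¹).card : ℝ) := by
    intro n
    have h1 : (S n).card ≤ F.card * (E (n + 1) \ E n).card :=
      (Finset.card_image_le).trans_eq (Finset.card_product _ _)
    have h2 : (E (n + 1) \ E n)⁻¹ = (E (n + 1))⁻¹ \ (E n)⁻¹ := by
      ext a; simp [Finset.mem_inv', Finset.mem_sdiff]
    have h3 : ((E (n + 1))⁻¹ \ (E n)⁻¹).card = (E (n + 1) \ E n).card := by
      rw [← h2, Finset.card_inv]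
    rw [h3]
    exact_mod_cast h1
  have hTvar : ∀ g n, ι g = n + 1 → T g ≤ varOn X φ (E n) := by
    intro g n hg
    simp only [hT]
    apply hvle n _ (hXshift g x hxX) _ (hXshift g ξ hξX)
    intro h hh
    show x (g * h) = ξ (g * h)
    exact (hξoff (g * h) (hιmin g n (by rw [hg]; exact Nat.lt_succ_self n) h hh)).symm
  -- finite sum bound
  have hsum : ∀ s : Finset G, ∑ g ∈ s, T g ≤ (F.card : ℝ) * svNorm X φ E := by
    intro s
    set N := s.sup ι with hN
    have hmap : ∀ g ∈ s, ι g ∈ Finset.range (N + 1) := by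
      intro g hg
      exact Finset.mem_range.mpr (Nat.lt_succ_of_le (Finset.le_sup hg))
    rw [← Finset.sum_fiberwise_of_maps_to hmap T, Finset.sum_range_succ']
    have h0 : ∑ g ∈ s.filter (fun g => ι g = 0), T g ≤ (F.card : ℝ) * ((E 0).card * (2 * B)) := by
      calc ∑ g ∈ s.filter (fun g => ι g = 0), T g
          ≤ ∑ _g ∈ s.filter (fun g => ι g = 0), 2 * B :=
            Finset.sum_le_sum fun g _ => hT2B g
        _ = ((s.filter (fun g => ι g = 0)).card : ℝ) * (2 * B) := by
            rw [Finset.sum_const, nsmul_eq_mul]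
        _ ≤ (S0.card : ℝ) * (2 * B) := by
            have hcc : (s.filter (fun g => ι g = 0)).card ≤ S0.card :=
              Finset.card_le_card fun g hg => hmem0 g (Finset.mem_filter.mp hg).2
            exact mul_le_mul_of_nonneg_right (by exact_mod_cast hcc) (by linarith)
        _ ≤ (F.card : ℝ) * ((E 0).card * (2 * B)) := by
            have := mul_le_mul_of_nonneg_right hcard0 (by linarith : (0:ℝ) ≤ 2 * B)
            linarith [this]
    have hn : ∀ n : ℕ, ∑ g ∈ s.filter (fun g => ι g = n + 1), T g
        ≤ (F.card : ℝ) * ((((E (n + 1))⁻¹ \ (E n)⁻¹).card : ℝ) * varOn X φ (E n)) := by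
      intro n
      calc ∑ g ∈ s.filter (fun g => ι g = n + 1), T g
          ≤ ∑ _g ∈ s.filter (fun g => ι g = n + 1), varOn X φ (E n) :=
            Finset.sum_le_sum fun g hg => hTvar g n (Finset.mem_filter.mp hg).2
        _ = ((s.filter (fun g => ι g = n + 1)).card : ℝ) * varOn X φ (E n) := by
            rw [Finset.sum_const, nsmul_eq_mul]
        _ ≤ ((S n).card : ℝ) * varOn X φ (E n) := by
            refine mul_le_mul_of_nonneg_right ?_ (hvnn n)
            exact_mod_cast Finset.card_le_card fun g hg => hmemS g n (Finset.mem_filter.mp hg).2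
        _ ≤ (F.card : ℝ) * ((((E (n + 1))⁻¹ \ (E n)⁻¹).card : ℝ) * varOn X φ (E n)) := by
            have := mul_le_mul_of_nonneg_right (hcardS n) (hvnn n)
            linarith [this, mul_assoc (F.card : ℝ) (((E (n + 1))⁻¹ \ (E n)⁻¹).card : ℝ)
              (varOn X φ (E n))]
    have hsum2 : ∑ n ∈ Finset.range N, ∑ g ∈ s.filter (fun g => ι g = n + 1), T g
        ≤ (F.card : ℝ) * ∑' n : ℕ, (((E (n + 1))⁻¹ \ (E n)⁻¹).card : ℝ) * varOn X φ (E n) := by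
      calc ∑ n ∈ Finset.range N, ∑ g ∈ s.filter (fun g => ι g = n + 1), T g
          ≤ ∑ n ∈ Finset.range N,
              (F.card : ℝ) * ((((E (n + 1))⁻¹ \ (E n)⁻¹).card : ℝ) * varOn X φ (E n)) :=
            Finset.sum_le_sum fun n _ => hn n
        _ = (F.card : ℝ) * ∑ n ∈ Finset.range N,
              (((E (n + 1))⁻¹ \ (E n)⁻¹).card : ℝ) * varOn X φ (E n) := by
            rw [Finset.mul_sum]
        _ ≤ (F.card : ℝ) * ∑' n : ℕ, (((E (n + 1))⁻¹ \ (E n)⁻¹).card : ℝ) * varOn X φ (E n) := by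
            refine mul_le_mul_of_nonneg_left ?_ (Nat.cast_nonneg _)
            exact Summable.sum_le_tsum _ (fun n _ => mul_nonneg (Nat.cast_nonneg _) (hvnn n)) hsv
    have hfinal : (F.card : ℝ) * svNorm X φ E =
        (F.card : ℝ) * ∑' n : ℕ, (((E (n + 1))⁻¹ \ (E n)⁻¹).card : ℝ) * varOn X φ (E n) +
        (F.card : ℝ) * ((E 0).card * (2 * B)) := by
      rw [svNorm, ← hBdef]
      ring
    linarith [h0, hsum2]
  have hSummable : Summable T := summable_of_sum_le hTnn hsum
  refine ⟨hSummable, ?_⟩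
  exact Summable.tsum_le_of_sum_le hSummable hsum
end

section
/- Let X ⊂ A^G be a subshift, {E_n} an exhaustive sequence, and φ ∈ SV_{{E_n}}(X). For each n define φ_n: X → ℝ by φ_n(x) = sup{φ(y) : y ∈ X, y|_{E_n} = x|_{E_n}}. Then φ_n → φ with respect to the summable variation norm ‖ψ‖_{SV_{{E_n}}} = 2|E_1|·‖ψ‖_∞ + ∑_k |E_{k+1}^{-1} \ E_k^{-1}|·Var_{E_k}(ψ). -/
open scoped Pointwise

/-- The locally constant upper approximation of `φ` on the finite set `E`. -/
noncomputable def upApprox {G A : Type*} [Group G] (X : Set (G → A)) (φ : (G → A) → ℝ)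
    (E : Finset G) (x : G → A) : ℝ :=
  sSup {r | ∃ y ∈ X, (∀ g ∈ E, y g = x g) ∧ r = φ y}

theorem uc_aux {G A : Type*} [Group G] [Countable G] [DecidableEq G]
    [TopologicalSpace A] [Fintype A] [DiscreteTopology A]
    (X : Set (G → A)) (hXcl : IsClosed X)
    (φ : (G → A) → ℝ) (hφ : ContinuousOn φ X)
    (E : ℕ → Finset G) (hE : exhaustive E) :
    ∀ ε > 0, ∃ N, ∀ x ∈ X, ∀ y ∈ X, (∀ g ∈ E N, x g = y g) → |φ x - φ y| ≤ ε := by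
  obtain ⟨hEmono, hEex⟩ := hE
  intro ε hε
  by_contra h
  push_neg at h
  set B : Set ((G → A) × (G → A)) :=
    (X ×ˢ X) ∩ (fun p : (G → A) × (G → A) => |φ p.1 - φ p.2|) ⁻¹' (Set.Ici ε) with hB
  set C : ℕ → Set ((G → A) × (G → A)) := fun n =>
    B ∩ {p | ∀ g ∈ E n, p.1 g = p.2 g} with hC
  have hcont : ContinuousOn (fun p : (G → A) × (G → A) => |φ p.1 - φ p.2|) (X ×ˢ X) := by
    have h1 : ContinuousOn (fun p : (G → A) × (G → A) => φ p.1) (X ×ˢ X) :=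
      hφ.comp continuous_fst.continuousOn (fun p hp => hp.1)
    have h2 : ContinuousOn (fun p : (G → A) × (G → A) => φ p.2) (X ×ˢ X) :=
      hφ.comp continuous_snd.continuousOn (fun p hp => hp.2)
    exact (h1.sub h2).abs
  have hBcl : IsClosed B :=
    hcont.preimage_isClosed_of_isClosed (hXcl.prod hXcl) isClosed_Ici
  have hagree_closed : ∀ n, IsClosed {p : (G → A) × (G → A) | ∀ g ∈ E n, p.1 g = p.2 g} := by
    intro n
    have heq : {p : (G → A) × (G → A) | ∀ g ∈ E n, p.1 g = p.2 g}
        = ⋂ g ∈ E n, {p : (G → A) × (G → A) | p.1 g = p.2 g} := by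
      ext p; simp [Set.mem_iInter]
    rw [heq]
    refine isClosed_biInter fun g _ => isClosed_eq ?_ ?_
    · exact (continuous_apply g).comp continuous_fst
    · exact (continuous_apply g).comp continuous_snd
  have hCcl : ∀ n, IsClosed (C n) := fun n => hBcl.inter (hagree_closed n)
  have hCne : ∀ n, (C n).Nonempty := by
    intro n
    obtain ⟨x, hx, y, hy, hagree, hlt⟩ := h n
    exact ⟨(x, y), ⟨⟨⟨hx, hy⟩, le_of_lt hlt⟩, hagree⟩⟩
  have hCanti : ∀ n, C (n + 1) ⊆ C n := by
    intro n p hp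
    exact ⟨hp.1, fun g hg => hp.2 g (hEmono (Nat.le_succ n) hg)⟩
  obtain ⟨p, hp⟩ := IsCompact.nonempty_iInter_of_sequence_nonempty_isCompact_isClosed C
    hCanti hCne ((hCcl 0).isCompact) hCcl
  have hxy : p.1 = p.2 := by
    funext g
    obtain ⟨n, hn⟩ := hEex g
    exact (Set.mem_iInter.mp hp n).2 g hn
  have hmem : ε ≤ |φ p.1 - φ p.2| := (Set.mem_iInter.mp hp 0).1.2
  rw [hxy, sub_self, abs_zero] at hmem
  linarith

/-- The locally constant upper approximations `φ_n` of `φ` converge to `φ` in the summable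
variation norm. -/
theorem stmt15 {G A : Type*} [Group G] [Countable G] [DecidableEq G]
    [TopologicalSpace A] [Fintype A] [DiscreteTopology A]
    (X : Set (G → A)) (hX : IsSubshift X) (hXne : X.Nonempty)
    (φ : (G → A) → ℝ) (hφ : ContinuousOn φ X)
    (E : ℕ → Finset G) (hE : exhaustive E)
    (hsv : Summable fun n : ℕ => (((E (n + 1))⁻¹ \ (E n)⁻¹).card : ℝ) * varOn X φ (E n)) :
    Filter.Tendsto (fun n => svNorm X (fun x => upApprox X φ (E n) x - φ x) E)
      Filter.atTop (nhds 0) := by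
  classical
  obtain ⟨hEmono, hEex⟩ := hE
  obtain ⟨x₀, hx₀⟩ := hXne
  have hXcl : IsClosed X := hX.1
  have hXcomp : IsCompact X := hXcl.isCompact
  obtain ⟨M, hM⟩ := hXcomp.exists_bound_of_continuousOn hφ
  simp only [Real.norm_eq_abs] at hM
  have hM0 : 0 ≤ M := (abs_nonneg _).trans (hM x₀ hx₀)
  -- basic facts about the sets defining `upApprox`
  have hSne : ∀ (F : Finset G), ∀ x ∈ X,
      ({r | ∃ y ∈ X, (∀ g ∈ F, y g = x g) ∧ r = φ y}).Nonempty :=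
    fun F x hx => ⟨φ x, x, hx, fun g _ => rfl, rfl⟩
  have hSbdd : ∀ (F : Finset G) (x : G → A),
      BddAbove {r | ∃ y ∈ X, (∀ g ∈ F, y g = x g) ∧ r = φ y} := by
    intro F x
    refine ⟨M, ?_⟩
    rintro r ⟨y, hy, -, rfl⟩
    exact (abs_le.mp (hM y hy)).2
  have hup_ge : ∀ (F : Finset G), ∀ x ∈ X, φ x ≤ upApprox X φ F x := fun F x hx =>
    le_csSup (hSbdd F x) ⟨x, hx, fun g _ => rfl, rfl⟩
  have hup_le : ∀ (F : Finset G), ∀ x ∈ X, upApprox X φ F x ≤ M := fun F x hx =>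
    csSup_le (hSne F x hx) (by rintro r ⟨y, hy, -, rfl⟩; exact (abs_le.mp (hM y hy)).2)
  have hψ_nonneg : ∀ n, ∀ x ∈ X, 0 ≤ upApprox X φ (E n) x - φ x := fun n x hx =>
    sub_nonneg.mpr (hup_ge (E n) x hx)
  -- uniform continuity
  have hUC := uc_aux X hXcl φ hφ E ⟨hEmono, hEex⟩
  have hψ_small : ∀ ε > 0, ∃ N, ∀ n ≥ N, ∀ x ∈ X, upApprox X φ (E n) x - φ x ≤ ε := by
    intro ε hε
    obtain ⟨N, hN⟩ := hUC ε hε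
    refine ⟨N, fun n hn x hx => ?_⟩
    have hle : upApprox X φ (E n) x ≤ φ x + ε := by
      refine csSup_le (hSne (E n) x hx) ?_
      rintro r ⟨y, hy, hagree, rfl⟩
      have h1 : |φ y - φ x| ≤ ε := hN y hy x hx (fun g hg => hagree g (hEmono hn hg))
      linarith [(abs_le.mp h1).2]
    linarith
  -- the sup-norm term
  set s : ℕ → ℝ := fun n => sSup {r | ∃ x ∈ X, r = |upApprox X φ (E n) x - φ x|} with hs
  have hTbdd : ∀ n, BddAbove {r | ∃ x ∈ X, r = |upApprox X φ (E n) x - φ x|} := by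
    intro n
    refine ⟨2 * M, ?_⟩
    rintro r ⟨x, hx, rfl⟩
    rw [abs_of_nonneg (hψ_nonneg n x hx)]
    have h1 := hup_le (E n) x hx
    have h2 := (abs_le.mp (hM x hx)).1
    linarith
  have hs_nonneg : ∀ n, 0 ≤ s n := fun n =>
    (abs_nonneg _).trans (le_csSup (hTbdd n) ⟨x₀, hx₀, rfl⟩)
  have hψ_le_s : ∀ n, ∀ x ∈ X, |upApprox X φ (E n) x - φ x| ≤ s n := fun n x hx =>
    le_csSup (hTbdd n) ⟨x, hx, rfl⟩
  have hs_small : ∀ ε > 0, ∃ N, ∀ n ≥ N, s n ≤ ε := by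
    intro ε hε
    obtain ⟨N, hN⟩ := hψ_small ε hε
    refine ⟨N, fun n hn => csSup_le ⟨_, x₀, hx₀, rfl⟩ ?_⟩
    rintro r ⟨x, hx, rfl⟩
    rw [abs_of_nonneg (hψ_nonneg n x hx)]
    exact hN n hn x hx
  have hs_tendsto : Filter.Tendsto s Filter.atTop (nhds 0) := by
    rw [Metric.tendsto_atTop]
    intro ε hε
    obtain ⟨N, hN⟩ := hs_small (ε / 2) (by linarith)
    refine ⟨N, fun n hn => ?_⟩
    rw [Real.dist_eq, sub_zero, abs_of_nonneg (hs_nonneg n)]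
    linarith [hN n hn]
  -- variation facts
  have hVset_bdd : ∀ (θ : (G → A) → ℝ) (B : ℝ), (∀ x ∈ X, |θ x| ≤ B) → ∀ F : Finset G,
      BddAbove {r | ∃ x ∈ X, ∃ y ∈ X, (∀ g ∈ F, x g = y g) ∧ r = θ x - θ y} := by
    intro θ B hB F
    refine ⟨2 * B, ?_⟩
    rintro r ⟨x, hx, y, hy, -, rfl⟩
    have h1 := (abs_le.mp (hB x hx)).2
    have h2 := (abs_le.mp (hB y hy)).1
    linarith
  have hvar_mem0 : ∀ (θ : (G → A) → ℝ) (F : Finset G),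
      (0 : ℝ) ∈ {r | ∃ x ∈ X, ∃ y ∈ X, (∀ g ∈ F, x g = y g) ∧ r = θ x - θ y} :=
    fun θ F => ⟨x₀, hx₀, x₀, hx₀, fun g _ => rfl, (sub_self _).symm⟩
  have hV_nonneg : ∀ k, 0 ≤ varOn X φ (E k) := by
    intro k
    simp only [varOn]
    exact le_csSup (hVset_bdd φ M hM (E k)) (hvar_mem0 φ (E k))
  have hvar_phi_elem : ∀ k, ∀ x ∈ X, ∀ y ∈ X, (∀ g ∈ E k, x g = y g) →
      φ x - φ y ≤ varOn X φ (E k) := by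
    intro k x hx y hy ha
    simp only [varOn]
    exact le_csSup (hVset_bdd φ M hM (E k)) ⟨x, hx, y, hy, ha, rfl⟩
  have hvar_le : ∀ (θ : (G → A) → ℝ) (F : Finset G) (a : ℝ), 0 ≤ a →
      (∀ x ∈ X, ∀ y ∈ X, (∀ g ∈ F, x g = y g) → θ x - θ y ≤ a) → varOn X θ F ≤ a := by
    intro θ F a ha h
    simp only [varOn]
    refine Real.sSup_le ?_ ha
    rintro r ⟨x, hx, y, hy, hag, rfl⟩
    exact h x hx y hy hag
  have hdom : ∀ n k, varOn X (fun x => upApprox X φ (E n) x - φ x) (E k)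
      ≤ 2 * varOn X φ (E k) := by
    intro n k
    refine hvar_le _ _ _ (by linarith [hV_nonneg k]) ?_
    intro x hx y hy hagree
    rcases le_total n k with hnk | hkn
    · have hsets : {r | ∃ z ∈ X, (∀ g ∈ E n, z g = x g) ∧ r = φ z}
          = {r | ∃ z ∈ X, (∀ g ∈ E n, z g = y g) ∧ r = φ z} := by
        ext r
        constructor
        · rintro ⟨z, hz, ha, rfl⟩
          exact ⟨z, hz, fun g hg => (ha g hg).trans (hagree g (hEmono hnk hg)), rfl⟩
        · rintro ⟨z, hz, ha, rfl⟩
          exact ⟨z, hz, fun g hg => (ha g hg).trans (hagree g (hEmono hnk hg)).symm, rfl⟩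
      have hupeq : upApprox X φ (E n) x = upApprox X φ (E n) y := by
        simp only [upApprox]
        rw [hsets]
      have h3 := hvar_phi_elem k y hy x hx (fun g hg => (hagree g hg).symm)
      have h4 := hV_nonneg k
      rw [hupeq]
      linarith
    · have h1 : upApprox X φ (E n) x ≤ φ y + varOn X φ (E k) := by
        refine csSup_le (hSne (E n) x hx) ?_
        rintro r ⟨z, hz, ha, rfl⟩
        have hzy : ∀ g ∈ E k, z g = y g := fun g hg =>
          (ha g (hEmono hkn hg)).trans (hagree g hg)
        have := hvar_phi_elem k z hz y hy hzy
        linarith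
      have h2 := hup_ge (E n) y hy
      have h3 := hvar_phi_elem k y hy x hx (fun g hg => (hagree g hg).symm)
      linarith
  have hvar_psi_nonneg : ∀ n k,
      0 ≤ varOn X (fun x => upApprox X φ (E n) x - φ x) (E k) := by
    intro n k
    simp only [varOn]
    exact le_csSup (hVset_bdd _ (s n) (hψ_le_s n) (E k)) (hvar_mem0 _ (E k))
  have hvar_psi_le : ∀ n k,
      varOn X (fun x => upApprox X φ (E n) x - φ x) (E k) ≤ 2 * s n := by
    intro n k
    refine hvar_le _ _ _ (by linarith [hs_nonneg n]) ?_
    intro x hx y hy _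
    have h1 := (abs_le.mp (hψ_le_s n x hx)).2
    have h2 := (abs_le.mp (hψ_le_s n y hy)).1
    linarith
  -- pointwise convergence of each series term
  have hpt : ∀ k : ℕ, Filter.Tendsto
      (fun n => (((E (k + 1))⁻¹ \ (E k)⁻¹).card : ℝ) *
        varOn X (fun x => upApprox X φ (E n) x - φ x) (E k))
      Filter.atTop (nhds 0) := by
    intro k
    have hc : (0 : ℝ) ≤ (((E (k + 1))⁻¹ \ (E k)⁻¹).card : ℝ) := Nat.cast_nonneg _
    refine squeeze_zero (fun n => mul_nonneg hc (hvar_psi_nonneg n k))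
      (fun n => mul_le_mul_of_nonneg_left (hvar_psi_le n k) hc) ?_
    have := (hs_tendsto.const_mul (2 : ℝ)).const_mul (((E (k + 1))⁻¹ \ (E k)⁻¹).card : ℝ)
    simpa using this
  -- Tannery / dominated convergence for the series
  have htsum : Filter.Tendsto
      (fun n => ∑' k : ℕ, (((E (k + 1))⁻¹ \ (E k)⁻¹).card : ℝ) *
        varOn X (fun x => upApprox X φ (E n) x - φ x) (E k))
      Filter.atTop (nhds (∑' _ : ℕ, (0 : ℝ))) := by
    refine tendsto_tsum_of_dominated_convergence
      (bound := fun k => (((E (k + 1))⁻¹ \ (E k)⁻¹).card : ℝ) * (2 * varOn X φ (E k)))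
      ((hsv.mul_left 2).congr fun k => by ring) hpt ?_
    refine Filter.Eventually.of_forall fun n k => ?_
    have hc : (0 : ℝ) ≤ (((E (k + 1))⁻¹ \ (E k)⁻¹).card : ℝ) := Nat.cast_nonneg _
    rw [Real.norm_eq_abs, abs_of_nonneg (mul_nonneg hc (hvar_psi_nonneg n k))]
    exact mul_le_mul_of_nonneg_left (hdom n k) hc
  -- conclude
  have hfirst : Filter.Tendsto (fun n => 2 * ((E 0).card : ℝ) * s n)
      Filter.atTop (nhds (2 * ((E 0).card : ℝ) * 0)) := hs_tendsto.const_mul _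
  have hsum := hfirst.add htsum
  simp only [svNorm]
  simpa using hsum
end

section
/- Let X ⊂ A^G be a subshift, F ⊂ G finite, and v, w ∈ L_F(X) with E_X(v) ⊂ E_X(w). Suppose φ ∈ SV(X) has summable variation. Then the function f: [v] → ℝ defined by f(x) = ∑_{g∈G} (φ(σ_g(ξ_{v,w}(x))) − φ(σ_g(x))) is continuous on the cylinder set [v]. -/
open scoped Pointwise

/-- If `E_X(v) ⊆ E_X(w)` and `φ` has summable variation, then
`f(x) = ∑_{g ∈ G} (φ(σ_g ξ_{v,w}(x)) - φ(σ_g x))` is continuous on the cylinder `[v]`. -/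
theorem stmt16 {G A : Type*} [Group G] [Countable G] [DecidableEq G]
    [TopologicalSpace A] [Fintype A] [DiscreteTopology A]
    (X : Set (G → A)) (hX : IsSubshift X)
    (φ : (G → A) → ℝ) (hφ : ContinuousOn φ X)
    (E : ℕ → Finset G) (hE : exhaustive E)
    (hsv : Summable fun n : ℕ => (((E (n + 1))⁻¹ \ (E n)⁻¹).card : ℝ) * varOn X φ (E n))
    (F : Finset G) (v w : G → A) (hv : inLang X F v) (hw : inLang X F w)
    (hext : extSet X F v ⊆ extSet X F w) :
    ContinuousOn
      (fun x => ∑' g : G, (φ (shiftMap g (xiMap X F v w x)) - φ (shiftMap g x)))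
      (cylSet X F v) := by
  classical
  obtain ⟨xv, hxvX, hxvF⟩ := hv
  have hXc : IsCompact X := by
    have : CompactSpace (G → A) := by infer_instance
    exact hX.1.isCompact
  obtain ⟨Cb, hCb⟩ := hXc.exists_bound_of_continuousOn hφ
  have hCb0 : 0 ≤ Cb := le_trans (norm_nonneg _) (hCb xv hxvX)
  -- boundedness of the variation sets
  have hbdd : ∀ En : Finset G,
      BddAbove {r | ∃ x ∈ X, ∃ y ∈ X, (∀ g ∈ En, x g = y g) ∧ r = φ x - φ y} := by
    intro En
    refine ⟨Cb + Cb, ?_⟩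
    rintro r ⟨x, hx, y, hy, -, rfl⟩
    have := hCb x hx
    have := hCb y hy
    have h1 : |φ x - φ y| ≤ |φ x| + |φ y| := abs_sub _ _
    rw [Real.norm_eq_abs] at *
    linarith [abs_nonneg (φ x), abs_nonneg (φ y), this, le_abs_self (φ x - φ y)]
  have hvar_nonneg : ∀ n : ℕ, 0 ≤ varOn X φ (E n) := by
    intro n
    refine le_csSup (hbdd (E n)) ?_
    exact ⟨xv, hxvX, xv, hxvX, fun _ _ => rfl, by ring⟩
  have hvar_le : ∀ (n : ℕ) (x y : G → A), x ∈ X → y ∈ X → (∀ g ∈ E n, x g = y g) →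
      |φ x - φ y| ≤ varOn X φ (E n) := by
    intro n x y hx hy hxy
    rw [abs_sub_le_iff]
    constructor
    · exact le_csSup (hbdd (E n)) ⟨x, hx, y, hy, hxy, rfl⟩
    · exact le_csSup (hbdd (E n)) ⟨y, hy, x, hx, fun g hg => (hxy g hg).symm, rfl⟩
  -- the key identity on the cylinder
  have hmemw : ∀ x ∈ cylSet X F v, concatOn F w x ∈ X := by
    rintro x ⟨hxX, hxF⟩
    have h1 : concatOn F v x = x := by
      funext g
      by_cases hg : g ∈ F
      · simp [concatOn, hg, (hxF g hg).symm]
      · simp [concatOn, hg]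
    have h2 : x ∈ extSet X F v := by
      show concatOn F v x ∈ X
      rw [h1]; exact hxX
    exact hext h2
  have hxi : ∀ x ∈ cylSet X F v, xiMap X F v w x = concatOn F w x := by
    intro x hx
    have := hmemw x hx
    rw [xiMap, if_pos ⟨hx.2, this⟩]
  rcases F.eq_empty_or_nonempty with hF | hF
  · -- F = ∅: the function is identically zero on the cylinder
    subst hF
    have heq : Set.EqOn
        (fun x => ∑' g : G, (φ (shiftMap g (xiMap X ∅ v w x)) - φ (shiftMap g x)))
        (fun _ => (0 : ℝ)) (cylSet X ∅ v) := by
      intro x hx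
      have h1 : concatOn ∅ w x = x := by
        funext g; simp [concatOn]
      simp only [hxi x hx, h1, sub_self, tsum_zero]
    exact continuousOn_const.congr heq
  · -- main case
    set C : ℕ → Finset G := fun n => F * (E n)⁻¹ with hCdef
    have hNex : ∀ g : G, ∃ n, g ∈ C n := by
      intro g
      obtain ⟨f, hf⟩ := hF
      obtain ⟨n, hn⟩ := hE.2 (g⁻¹ * f)
      refine ⟨n, ?_⟩
      rw [hCdef]
      refine Finset.mem_mul.2 ⟨f, hf, (g⁻¹ * f)⁻¹, Finset.inv_mem_inv hn, ?_⟩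
      group
    set N : G → ℕ := fun g => Nat.find (hNex g) with hNdef
    have hNspec : ∀ g : G, g ∈ C (N g) := fun g => Nat.find_spec (hNex g)
    have hNmin : ∀ (g : G) (m : ℕ), m < N g → g ∉ C m := fun g m h => Nat.find_min (hNex g) h
    set u : G → ℝ := fun g => if g ∈ C 0 then Cb + Cb else varOn X φ (E (N g - 1)) with hudef
    have hu_nonneg : ∀ g, 0 ≤ u g := by
      intro g
      rw [hudef]
      dsimp only
      split
      · linarith
      · exact hvar_nonneg _
    -- not in C m means the shifted configurations agree on E m
    have hagree : ∀ (g : G) (m : ℕ), g ∉ C m → ∀ x ∈ cylSet X F v,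
        ∀ h ∈ E m, shiftMap g (concatOn F w x) h = shiftMap g x h := by
      intro g m hg x _ h hh
      have hgh : g * h ∉ F := by
        intro hmem
        apply hg
        rw [hCdef]
        refine Finset.mem_mul.2 ⟨g * h, hmem, h⁻¹, Finset.inv_mem_inv hh, ?_⟩
        group
      simp [shiftMap, concatOn, hgh]
    -- membership facts
    have hmemshift : ∀ (g : G) (y : G → A), y ∈ X → shiftMap g y ∈ X := fun g y hy => hX.2 g y hy
    -- the uniform bound
    have hbound : ∀ (g : G), ∀ x ∈ cylSet X F v,
        |φ (shiftMap g (xiMap X F v w x)) - φ (shiftMap g x)| ≤ u g := by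
      intro g x hx
      have hxX : x ∈ X := hx.1
      have h1 : shiftMap g (concatOn F w x) ∈ X := hmemshift g _ (hmemw x hx)
      have h2 : shiftMap g x ∈ X := hmemshift g _ hxX
      rw [hxi x hx]
      rw [hudef]
      dsimp only
      split
      · have b1 := hCb _ h1
        have b2 := hCb _ h2
        rw [Real.norm_eq_abs] at b1 b2
        have := abs_sub (φ (shiftMap g (concatOn F w x))) (φ (shiftMap g x))
        linarith
      · rename_i hg0
        have hN1 : N g ≠ 0 := by
          intro h0
          apply hg0
          have := hNspec g
          rwa [h0] at this
        have hglt : N g - 1 < N g := Nat.sub_lt (Nat.pos_of_ne_zero hN1) one_pos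
        have hgnot : g ∉ C (N g - 1) := hNmin g _ hglt
        exact hvar_le _ _ _ h1 h2 (hagree g (N g - 1) hgnot x hx)
    -- summability of the dominating function
    have hsum : Summable u := by
      set T : ℝ := ∑' n : ℕ, (((E (n + 1))⁻¹ \ (E n)⁻¹).card : ℝ) * varOn X φ (E n) with hTdef
      have hterm_nonneg : ∀ n : ℕ,
          0 ≤ (((E (n + 1))⁻¹ \ (E n)⁻¹).card : ℝ) * varOn X φ (E n) := by
        intro n
        exact mul_nonneg (Nat.cast_nonneg _) (hvar_nonneg n)
      apply summable_of_sum_le hu_nonneg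
        (c := (Cb + Cb) * (C 0).card + (F.card : ℝ) * T)
      intro s
      rw [← Finset.sum_filter_add_sum_filter_not s (fun g => g ∈ C 0)]
      have hfirst : ∑ g ∈ s.filter (fun g => g ∈ C 0), u g ≤ (Cb + Cb) * (C 0).card := by
        have : ∀ g ∈ s.filter (fun g => g ∈ C 0), u g = Cb + Cb := by
          intro g hg
          rw [hudef]
          dsimp only
          rw [if_pos (Finset.mem_filter.1 hg).2]
        rw [Finset.sum_congr rfl this, Finset.sum_const, nsmul_eq_mul]
        have hcard : (s.filter (fun g => g ∈ C 0)).card ≤ (C 0).card :=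
          Finset.card_le_card (fun g hg => (Finset.mem_filter.1 hg).2)
        calc ((s.filter (fun g => g ∈ C 0)).card : ℝ) * (Cb + Cb)
            ≤ ((C 0).card : ℝ) * (Cb + Cb) := by
              apply mul_le_mul_of_nonneg_right _ (by linarith)
              exact_mod_cast hcard
          _ = (Cb + Cb) * (C 0).card := by ring
      have hsecond : ∑ g ∈ s.filter (fun g => ¬ g ∈ C 0), u g ≤ (F.card : ℝ) * T := by
        set s' : Finset G := s.filter (fun g => ¬ g ∈ C 0) with hs'def
        set key : G → ℕ := fun g => N g - 1 with hkeydef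
        set t : Finset ℕ := s'.image key with htdef
        have hmapsto : ∀ g ∈ s', key g ∈ t := fun g hg => Finset.mem_image_of_mem key hg
        have hfib := Finset.sum_fiberwise_of_maps_to' (t := t) (g := key) hmapsto
          (fun k => varOn X φ (E k))
        have hueq : ∀ g ∈ s', u g = varOn X φ (E (key g)) := by
          intro g hg
          rw [hudef]
          dsimp only
          rw [if_neg (Finset.mem_filter.1 hg).2]
        rw [Finset.sum_congr rfl hueq, ← hfib]
        -- now bound each fiber
        have hfiber : ∀ k ∈ t,
            ∑ g ∈ s'.filter (fun g => key g = k), varOn X φ (E k)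
              ≤ (F.card : ℝ) * ((((E (k + 1))⁻¹ \ (E k)⁻¹).card : ℝ) * varOn X φ (E k)) := by
          intro k _
          rw [Finset.sum_const, nsmul_eq_mul]
          have hsub : s'.filter (fun g => key g = k) ⊆ F * ((E (k + 1))⁻¹ \ (E k)⁻¹) := by
            intro g hg
            obtain ⟨hgs', hgk⟩ := Finset.mem_filter.1 hg
            have hg0 : g ∉ C 0 := (Finset.mem_filter.1 hgs').2
            have hN1 : N g ≠ 0 := by
              intro h0
              apply hg0
              have := hNspec g
              rwa [h0] at this
            have hNg : N g = k + 1 := by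
              rw [hkeydef] at hgk
              dsimp only at hgk
              omega
            have hmem1 : g ∈ C (k + 1) := by
              have := hNspec g
              rwa [hNg] at this
            have hmem2 : g ∉ C k := by
              have hk : k < N g := by omega
              exact hNmin g k hk
            rw [hCdef] at hmem1 hmem2
            obtain ⟨f, hf, e, he, hfe⟩ := Finset.mem_mul.1 hmem1
            have hek : e ∉ (E k)⁻¹ := by
              intro hek
              exact hmem2 (Finset.mem_mul.2 ⟨f, hf, e, hek, hfe⟩)
            exact Finset.mem_mul.2 ⟨f, hf, e, Finset.mem_sdiff.2 ⟨he, hek⟩, hfe⟩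
          have hcard1 : (s'.filter (fun g => key g = k)).card
              ≤ (F * ((E (k + 1))⁻¹ \ (E k)⁻¹)).card := Finset.card_le_card hsub
          have hcard2 : (F * ((E (k + 1))⁻¹ \ (E k)⁻¹)).card
              ≤ F.card * ((E (k + 1))⁻¹ \ (E k)⁻¹).card := Finset.card_mul_le
          have hcard : ((s'.filter (fun g => key g = k)).card : ℝ)
              ≤ (F.card : ℝ) * (((E (k + 1))⁻¹ \ (E k)⁻¹).card : ℝ) := by
            push_cast
            exact_mod_cast hcard1.trans hcard2
          calc ((s'.filter (fun g => key g = k)).card : ℝ) * varOn X φ (E k)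
              ≤ ((F.card : ℝ) * (((E (k + 1))⁻¹ \ (E k)⁻¹).card : ℝ)) * varOn X φ (E k) :=
                mul_le_mul_of_nonneg_right hcard (hvar_nonneg k)
            _ = (F.card : ℝ) * ((((E (k + 1))⁻¹ \ (E k)⁻¹).card : ℝ) * varOn X φ (E k)) := by
                ring
        calc ∑ k ∈ t, ∑ g ∈ s'.filter (fun g => key g = k), varOn X φ (E k)
            ≤ ∑ k ∈ t, (F.card : ℝ) * ((((E (k + 1))⁻¹ \ (E k)⁻¹).card : ℝ) * varOn X φ (E k)) :=
              Finset.sum_le_sum hfiber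
          _ = (F.card : ℝ) * ∑ k ∈ t,
                (((E (k + 1))⁻¹ \ (E k)⁻¹).card : ℝ) * varOn X φ (E k) := by
              rw [Finset.mul_sum]
          _ ≤ (F.card : ℝ) * T := by
              apply mul_le_mul_of_nonneg_left _ (Nat.cast_nonneg _)
              exact hTdef ▸ Summable.sum_le_tsum t (fun k _ => hterm_nonneg k) hsv
      linarith
    -- continuity of each term on the cylinder
    have hcont : ∀ g : G, ContinuousOn
        (fun x : G → A => φ (shiftMap g (xiMap X F v w x)) - φ (shiftMap g x))
        (cylSet X F v) := by
      intro g
      have h1 : Continuous (fun x : G → A => shiftMap g (concatOn F w x)) := by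
        apply continuous_pi
        intro h
        by_cases hgh : g * h ∈ F
        · simpa [shiftMap, concatOn, hgh] using continuous_const
        · simpa [shiftMap, concatOn, hgh] using continuous_apply (g * h)
      have h2 : Continuous (fun x : G → A => shiftMap g x) := by
        apply continuous_pi
        intro h
        exact continuous_apply (g * h)
      have hc1 : ContinuousOn (fun x : G → A => φ (shiftMap g (concatOn F w x)))
          (cylSet X F v) := by
        apply hφ.comp h1.continuousOn
        intro x hx
        exact hmemshift g _ (hmemw x hx)
      have hc2 : ContinuousOn (fun x : G → A => φ (shiftMap g x)) (cylSet X F v) := by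
        apply hφ.comp h2.continuousOn
        intro x hx
        exact hmemshift g _ hx.1
      have heq : Set.EqOn
          (fun x : G → A => φ (shiftMap g (xiMap X F v w x)) - φ (shiftMap g x))
          (fun x : G → A => φ (shiftMap g (concatOn F w x)) - φ (shiftMap g x))
          (cylSet X F v) := by
        intro x hx
        simp only [hxi x hx]
      exact (hc1.sub hc2).congr heq
    -- conclude via uniform convergence
    have htu := tendstoUniformlyOn_tsum hsum
      (f := fun (g : G) (x : G → A) => φ (shiftMap g (xiMap X F v w x)) - φ (shiftMap g x))
      (s := cylSet X F v)
      (fun g x hx => by rw [Real.norm_eq_abs]; exact hbound g x hx)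
    apply htu.continuousOn
    apply Filter.Eventually.frequently
    filter_upwards with t
    exact continuousOn_finset_sum t (fun g _ => hcont g)
end
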